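/- arXiv:1707.00796 — 2 statements merged into one kernel-verified Lean document; each statement's English description precedes it below -/
import Mathlib

section
/- Let X, Z_i, Z_N, Z_R be random variables taking values in finite measurable spaces on a probability space (Ω, μ). Then I[X : Z_i | Z_N] − I[X : Z_i | ⟨Z_N, Z_R⟩] = (I[X : ⟨Z_N, Z_R⟩] − I[X : Z_N] − I[X : Z_R]) + I[⟨Z_i, Z_N⟩ : Z_R] − I[⟨Z_i, Z_N⟩ : Z_R | X]. -/
open MeasureTheory ProbabilityTheory

/-- Shannon entropy of a random variable with values in a finite measurable space. -/
noncomputable def entropy {Ω S : Type*} [MeasurableSpace Ω] [Fintype S] [MeasurableSpace S]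
    (X : Ω → S) (μ : Measure Ω) : ℝ :=
  ∑ x : S, Real.negMulLog ((μ.map X) {x}).toReal

/-- Conditional entropy H[X | Y]. -/
noncomputable def condEntropy {Ω S T : Type*} [MeasurableSpace Ω] [Fintype S] [MeasurableSpace S]
    [Fintype T] [MeasurableSpace T] (X : Ω → S) (Y : Ω → T) (μ : Measure Ω) : ℝ :=
  ∑ y : T, ((μ.map Y) {y}).toReal * entropy X (ProbabilityTheory.cond μ (Y ⁻¹' {y}))

/-- Mutual information I[X : Y]. -/
noncomputable def mutualInfo {Ω S T : Type*} [MeasurableSpace Ω] [Fintype S] [MeasurableSpace S]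
    [Fintype T] [MeasurableSpace T] (X : Ω → S) (Y : Ω → T) (μ : Measure Ω) : ℝ :=
  entropy X μ + entropy Y μ - entropy (fun ω => (X ω, Y ω)) μ

/-- Conditional mutual information I[X : Y | Z]. -/
noncomputable def condMutualInfo {Ω S T U : Type*} [MeasurableSpace Ω] [Fintype S]
    [MeasurableSpace S] [Fintype T] [MeasurableSpace T] [Fintype U] [MeasurableSpace U]
    (X : Ω → S) (Y : Ω → T) (Z : Ω → U) (μ : Measure Ω) : ℝ :=
  ∑ z : U, ((μ.map Z) {z}).toReal * mutualInfo X Y (ProbabilityTheory.cond μ (Z ⁻¹' {z}))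

/-!
Every conditional mutual information expands, by the chain rule `H[W | Z] = H[⟨W, Z⟩] - H[Z]`,
into `I[X : Y | Z] = H[⟨X, Z⟩] + H[⟨Y, Z⟩] - H[⟨X, Y, Z⟩] - H[Z]`, and mutual information is by
definition such a combination. Both sides of the identity thus become integer combinations of joint
entropies, which agree once joint entropies of regrouped tuples are identified (entropy is invariant
under a bijective relabelling of values).
-/

open Real

section

variable {Ω S T U : Type*} [MeasurableSpace Ω] {μ : Measure Ω}
  [Fintype S] [MeasurableSpace S] [Fintype T] [MeasurableSpace T] [Fintype U] [MeasurableSpace U]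

lemma condMutualInfo_eq_condEntropy (X : Ω → S) (Y : Ω → T) (Z : Ω → U) :
    condMutualInfo X Y Z μ
      = condEntropy X Z μ + condEntropy Y Z μ - condEntropy (fun ω => (X ω, Y ω)) Z μ := by
  simp only [condMutualInfo, mutualInfo, condEntropy, mul_sub, mul_add, Finset.sum_add_distrib,
    Finset.sum_sub_distrib]

variable [MeasurableSingletonClass S] [MeasurableSingletonClass T] [MeasurableSingletonClass U]

lemma entropy_eq_sum_negMulLog_measureReal {W : Ω → S} (hW : Measurable W) :
    entropy W μ = ∑ x, negMulLog (μ.real (W ⁻¹' {x})) := by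
  simp only [entropy, ← measureReal_def, map_measureReal_apply hW (measurableSet_singleton _)]

lemma entropy_comp_equiv {W : Ω → S} (hW : Measurable W) (e : S ≃ T) :
    entropy (fun ω => e (W ω)) μ = entropy W μ := by
  have he : Measurable fun ω => e (W ω) := (measurable_of_finite e).comp hW
  rw [entropy_eq_sum_negMulLog_measureReal he, entropy_eq_sum_negMulLog_measureReal hW]
  refine (Fintype.sum_equiv e _ _ fun x => ?_).symm
  congr 3
  ext ω
  simp

lemma sum_measureReal_preimage_singleton_inter [IsFiniteMeasure μ] {W : Ω → S}
    (hW : Measurable W) (A : Set Ω) :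
    ∑ w, μ.real (W ⁻¹' {w} ∩ A) = μ.real A := by
  simp_rw [← measureReal_restrict_apply (hW (measurableSet_singleton _))]
  rw [sum_measureReal_preimage_singleton _ fun w _ => hW (measurableSet_singleton w)]
  simp

lemma measureReal_mul_entropy_cond [IsFiniteMeasure μ] {W : Ω → S} (hW : Measurable W)
    {A : Set Ω} (hA : MeasurableSet A) :
    μ.real A * entropy W (cond μ A)
      = ∑ w, negMulLog (μ.real (W ⁻¹' {w} ∩ A)) - negMulLog (μ.real A) := by
  rcases measureReal_nonneg.eq_or_lt with hp | hp
  · have hq : ∀ w, μ.real (W ⁻¹' {w} ∩ A) = 0 := fun w =>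
      measureReal_mono_null Set.inter_subset_right hp.symm
    simp [← hp, hq]
  set p := μ.real A
  have hcond : ∀ w, (cond μ A).real (W ⁻¹' {w}) = μ.real (W ⁻¹' {w} ∩ A) / p := fun w => by
    simp [measureReal_def, cond_apply hA, ENNReal.toReal_mul, Set.inter_comm, div_eq_inv_mul, p]
  -- `negMulLog (p * t) = t * negMulLog p + p * negMulLog t` with `t = μ.real (W⁻¹{w} ∩ A) / p`
  calc p * entropy W (cond μ A)
      = ∑ w, (negMulLog (μ.real (W ⁻¹' {w} ∩ A))
          - μ.real (W ⁻¹' {w} ∩ A) / p * negMulLog p) := by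
        rw [entropy_eq_sum_negMulLog_measureReal hW, Finset.mul_sum]
        refine Finset.sum_congr rfl fun w _ => ?_
        rw [hcond, eq_sub_iff_add_eq, add_comm, ← negMulLog_mul, mul_div_cancel₀ _ hp.ne']
    _ = _ := by
        rw [Finset.sum_sub_distrib, ← Finset.sum_mul, ← Finset.sum_div,
          sum_measureReal_preimage_singleton_inter hW, div_self hp.ne', one_mul]

theorem condEntropy_eq_entropy_prod_sub [IsFiniteMeasure μ] {W : Ω → S} {Z : Ω → T}
    (hW : Measurable W) (hZ : Measurable Z) :
    condEntropy W Z μ = entropy (fun ω => (W ω, Z ω)) μ - entropy Z μ := by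
  simp only [condEntropy, ← measureReal_def, map_measureReal_apply hZ (measurableSet_singleton _),
    measureReal_mul_entropy_cond hW (hZ (measurableSet_singleton _)), Finset.sum_sub_distrib]
  rw [entropy_eq_sum_negMulLog_measureReal (hW.prodMk hZ), entropy_eq_sum_negMulLog_measureReal hZ,
    Fintype.sum_prod_type, Finset.sum_comm]
  simp only [← Set.singleton_prod_singleton, Set.mk_preimage_prod]

theorem condMutualInfo_eq_entropy [IsFiniteMeasure μ] {X : Ω → S} {Y : Ω → T} {Z : Ω → U}
    (hX : Measurable X) (hY : Measurable Y) (hZ : Measurable Z) :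
    condMutualInfo X Y Z μ
      = entropy (fun ω => (X ω, Z ω)) μ + entropy (fun ω => (Y ω, Z ω)) μ
        - entropy (fun ω => ((X ω, Y ω), Z ω)) μ - entropy Z μ := by
  rw [condMutualInfo_eq_condEntropy, condEntropy_eq_entropy_prod_sub hX hZ,
    condEntropy_eq_entropy_prod_sub hY hZ, condEntropy_eq_entropy_prod_sub (hX.prodMk hY) hZ]
  ring

end

/-- Lemma 2, equation (14b): the approximation error of the local utility satisfies
`I[X : Zi | ZN] − I[X : Zi | ⟨ZN, ZR⟩]
  = (I[X : ⟨ZN, ZR⟩] − I[X : ZN] − I[X : ZR]) + I[⟨Zi, ZN⟩ : ZR] − I[⟨Zi, ZN⟩ : ZR | X]`. -/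
theorem approx_local_utility_error_second_form
    {Ω 𝒳 𝒵i 𝒵N 𝒵R : Type*} [MeasurableSpace Ω]
    [Fintype 𝒳] [MeasurableSpace 𝒳] [MeasurableSingletonClass 𝒳]
    [Fintype 𝒵i] [MeasurableSpace 𝒵i] [MeasurableSingletonClass 𝒵i]
    [Fintype 𝒵N] [MeasurableSpace 𝒵N] [MeasurableSingletonClass 𝒵N]
    [Fintype 𝒵R] [MeasurableSpace 𝒵R] [MeasurableSingletonClass 𝒵R]
    (μ : Measure Ω) [IsProbabilityMeasure μ]
    (X : Ω → 𝒳) (Zi : Ω → 𝒵i) (ZN : Ω → 𝒵N) (ZR : Ω → 𝒵R)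
    (hX : Measurable X) (hZi : Measurable Zi) (hZN : Measurable ZN) (hZR : Measurable ZR) :
    condMutualInfo X Zi ZN μ - condMutualInfo X Zi (fun ω => (ZN ω, ZR ω)) μ
      = (mutualInfo X (fun ω => (ZN ω, ZR ω)) μ - mutualInfo X ZN μ - mutualInfo X ZR μ)
        + mutualInfo (fun ω => (Zi ω, ZN ω)) ZR μ
        - condMutualInfo (fun ω => (Zi ω, ZN ω)) ZR X μ := by
  have hNR := hZN.prodMk hZR
  rw [condMutualInfo_eq_entropy hX hZi hZN, condMutualInfo_eq_entropy hX hZi hNR,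
    condMutualInfo_eq_entropy (hZi.prodMk hZN) hZR hX]
  have e₁ := entropy_comp_equiv (μ := μ) (hZi.prodMk hNR) (Equiv.prodAssoc 𝒵i 𝒵N 𝒵R).symm
  have e₂ := entropy_comp_equiv (μ := μ) (hX.prodMk hZR) (Equiv.prodComm 𝒳 𝒵R)
  have e₃ := entropy_comp_equiv (μ := μ) ((hX.prodMk hZi).prodMk hZN)
    ((Equiv.prodAssoc 𝒳 𝒵i 𝒵N).trans (Equiv.prodComm _ _))
  have e₄ := entropy_comp_equiv (μ := μ) ((hX.prodMk hZi).prodMk hNR)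
    ((Equiv.prodAssoc _ _ _).trans <| (Equiv.prodComm _ _).trans <|
      (Equiv.prodAssoc 𝒵i 𝒵N 𝒵R).symm.prodCongr (Equiv.refl 𝒳))
  simp only [Equiv.trans_apply, Equiv.prodAssoc_apply, Equiv.prodAssoc_symm_apply,
    Equiv.prodComm_apply, Equiv.prodCongr_apply, Equiv.coe_refl, Prod.map_apply, Prod.swap_prod_mk,
    id_eq] at e₁ e₂ e₃ e₄
  simp only [mutualInfo]
  linarith
end

section
/- Let a finite strategic-form game with players indexed by a finite type ι and nonempty finite strategy sets S i have utilities U admitting a potential function φ, and let Ũ be another family of utilities on the same strategy spaces with |U i s − Ũ i s| ≤ Δ for every player i and every strategy profile s. Then the game with utilities Ũ possesses at least one 2Δ-equilibrium. -/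
/-!
A maximiser of the potential is an exact Nash equilibrium of `U`, since any unilateral
deviation changes the deviator's utility by exactly the change of the potential. Moving from
`U` to `Ut` perturbs each of the two utilities compared in a deviation by at most `Δ`, so the
same profile is a `2Δ`-equilibrium of `Ut`.
-/

namespace StrategicGame

variable {ι : Type*} [DecidableEq ι] {S : ι → Type*}

def IsApproxEquilibrium (U : ι → (∀ j, S j) → ℝ) (ε : ℝ) (s : ∀ j, S j) : Prop :=
  ∀ (i : ι) (si' : S i), U i (Function.update s i si') - U i s ≤ ε

def IsPotential (U : ι → (∀ j, S j) → ℝ) (φ : (∀ j, S j) → ℝ) : Prop :=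
  ∀ (i : ι) (si' si'' : S i) (s : ∀ j, S j),
    U i (Function.update s i si') - U i (Function.update s i si'')
      = φ (Function.update s i si') - φ (Function.update s i si'')

theorem IsPotential.utility_sub_eq {U : ι → (∀ j, S j) → ℝ} {φ : (∀ j, S j) → ℝ}
    (hφ : IsPotential U φ) (s : ∀ j, S j) (i : ι) (si' : S i) :
    U i (Function.update s i si') - U i s = φ (Function.update s i si') - φ s := by
  simpa only [Function.update_eq_self] using hφ i si' (s i) s

theorem IsPotential.isApproxEquilibrium_zero_of_isMaxOn {U : ι → (∀ j, S j) → ℝ}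
    {φ : (∀ j, S j) → ℝ} (hφ : IsPotential U φ) {s : ∀ j, S j}
    (hs : IsMaxOn φ Set.univ s) : IsApproxEquilibrium U 0 s := fun i si' => by
  rw [hφ.utility_sub_eq, sub_nonpos]
  exact hs (Set.mem_univ _)

theorem IsApproxEquilibrium.of_abs_sub_le {U Ut : ι → (∀ j, S j) → ℝ} {ε Δ : ℝ}
    {s : ∀ j, S j} (hs : IsApproxEquilibrium U ε s)
    (hclose : ∀ (i : ι) (s : ∀ j, S j), |U i s - Ut i s| ≤ Δ) :
    IsApproxEquilibrium Ut (ε + 2 * Δ) s := fun i si' => by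
  have hdev := abs_le.mp (hclose i (Function.update s i si'))
  have hstay := abs_le.mp (hclose i s)
  linarith [hs i si']

end StrategicGame

/-- Theorem 1 (existence form): if utilities `U` admit a potential function `φ` and `Ut` is a
family of utilities on the same strategy spaces with `|U i s − Ut i s| ≤ Δ` for all `i` and `s`,
then the game with utilities `Ut` possesses at least one `2Δ`-equilibrium. -/
theorem approx_potential_game_has_two_delta_equilibrium
    {ι : Type*} [Fintype ι] [DecidableEq ι]
    {S : ι → Type*} [∀ i, Fintype (S i)] [∀ i, Nonempty (S i)]
    (U Ut : ∀ i : ι, (∀ j, S j) → ℝ) (φ : (∀ j, S j) → ℝ) (Δ : ℝ)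
    (hpot : ∀ (i : ι) (si' si'' : S i) (s : ∀ j, S j),
      U i (Function.update s i si') - U i (Function.update s i si'')
        = φ (Function.update s i si') - φ (Function.update s i si''))
    (hclose : ∀ (i : ι) (s : ∀ j, S j), |U i s - Ut i s| ≤ Δ) :
    ∃ s : ∀ j, S j, ∀ (i : ι) (si' : S i),
      Ut i (Function.update s i si') - Ut i s ≤ 2 * Δ := by
  obtain ⟨s, hs⟩ := Finite.exists_max φ
  have hNash : StrategicGame.IsApproxEquilibrium U 0 s :=
    StrategicGame.IsPotential.isApproxEquilibrium_zero_of_isMaxOn hpot fun t _ => hs t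
  have h2Δ : StrategicGame.IsApproxEquilibrium Ut (0 + 2 * Δ) s := hNash.of_abs_sub_le hclose
  exact ⟨s, by rwa [zero_add] at h2Δ⟩
end
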